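/- arXiv:1206.6900 — 4 statements merged into one kernel-verified Lean document; each statement's English description precedes it below -/
import Mathlib

section
/- Let σ be a nonincreasing nonnegative sequence and let (M(α,β))_{α≥1, 1≤β≤r} be a matrix with ∑_β M(α,β)² ≤ 1 for each α and ∑_α M(α,β)² ≤ 1 for each β. Then ∑_{α,β} σ(α) M(α,β)² ≤ ∑_{α=1}^{r} σ(α). -/
/-!
Put `w α = ∑_β M(α,β)²`, so that `0 ≤ w α ≤ 1` and, by the column bounds, every partial sum of
`w` is at most `r`. For `α < N` with `r ≤ N` one has `(σ α - σ r) (w α - [α < r]) ≤ 0`; summing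
gives `∑_{α<N} σ α w α ≤ ∑_{α<r} σ α + σ r (∑_{α<N} w α - r) ≤ ∑_{α<r} σ α`.
-/

open Finset

theorem Finset.sum_sum_le_sum_tsum {ι : Type*} [Fintype ι] {f : ℕ → ι → ℝ}
    (hf : ∀ α β, 0 ≤ f α β) (hsum : ∀ β, Summable (f · β)) (s : Finset ℕ) :
    ∑ α ∈ s, ∑ β, f α β ≤ ∑ β, ∑' α, f α β := by
  rw [Finset.sum_comm]
  exact sum_le_sum fun β _ => (hsum β).sum_le_tsum s fun α _ => hf α β

theorem sum_range_mul_le_sum_range_of_antitone {σ w : ℕ → ℝ} {r N : ℕ}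
    (hσ : Antitone σ) (hσr : 0 ≤ σ r) (hw0 : ∀ α, 0 ≤ w α) (hw1 : ∀ α, w α ≤ 1)
    (hrN : r ≤ N) (hwN : ∑ α ∈ range N, w α ≤ r) :
    ∑ α ∈ range N, σ α * w α ≤ ∑ α ∈ range r, σ α := by
  have head : ∑ α ∈ range r, σ α * w α ≤ ∑ α ∈ range r, (σ α + σ r * (w α - 1)) :=
    sum_le_sum fun α hα => by
      have : σ r ≤ σ α := hσ (mem_range.mp hα).le
      nlinarith [hw1 α]
  have tail : ∑ α ∈ Ico r N, σ α * w α ≤ ∑ α ∈ Ico r N, σ r * w α :=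
    sum_le_sum fun α hα => mul_le_mul_of_nonneg_right (hσ (mem_Ico.mp hα).1) (hw0 α)
  have w_split := sum_range_add_sum_Ico w hrN
  calc ∑ α ∈ range N, σ α * w α
      = ∑ α ∈ range r, σ α * w α + ∑ α ∈ Ico r N, σ α * w α :=
        (sum_range_add_sum_Ico _ hrN).symm
    _ ≤ ∑ α ∈ range r, (σ α + σ r * (w α - 1)) + ∑ α ∈ Ico r N, σ r * w α :=
        add_le_add head tail
    _ = ∑ α ∈ range r, σ α + σ r * (∑ α ∈ range N, w α - r) := by
        rw [sum_add_distrib, ← mul_sum, ← mul_sum, sum_sub_distrib, ← w_split]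
        simp only [sum_const, card_range, nsmul_eq_mul, mul_one]
        ring
    _ ≤ ∑ α ∈ range r, σ α :=
        add_le_of_nonpos_right (mul_nonpos_of_nonneg_of_nonpos hσr (by linarith))

theorem stmt_2_general (σ : ℕ → ℝ) (hσ_nonneg : ∀ α, 0 ≤ σ α) (hσ_mono : Antitone σ)
    (r : ℕ) (M : ℕ → Fin r → ℝ)
    (hrow : ∀ α, ∑ β, (M α β) ^ 2 ≤ 1)
    (hcol_summable : ∀ β, Summable (fun α => (M α β) ^ 2))
    (hcol : ∀ β, ∑' α, (M α β) ^ 2 ≤ 1) :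
    ∑' α, σ α * ∑ β, (M α β) ^ 2 ≤ ∑ α ∈ Finset.range r, σ α := by
  have hw0 (α : ℕ) : 0 ≤ ∑ β, M α β ^ 2 := sum_nonneg fun β _ => sq_nonneg _
  have hwN (N : ℕ) : ∑ α ∈ range N, ∑ β, M α β ^ 2 ≤ r :=
    calc ∑ α ∈ range N, ∑ β, M α β ^ 2
        ≤ ∑ β, ∑' α, M α β ^ 2 := sum_sum_le_sum_tsum (fun _ _ => sq_nonneg _) hcol_summable _
      _ ≤ ∑ _β : Fin r, (1 : ℝ) := sum_le_sum fun β _ => hcol β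
      _ = r := by simp
  refine Real.tsum_le_of_sum_range_le (fun α => mul_nonneg (hσ_nonneg α) (hw0 α)) fun N => ?_
  calc ∑ α ∈ range N, σ α * ∑ β, M α β ^ 2
      ≤ ∑ α ∈ range (N + r), σ α * ∑ β, M α β ^ 2 :=
        sum_le_sum_of_subset_of_nonneg (range_subset_range.mpr (by omega))
          fun α _ _ => mul_nonneg (hσ_nonneg α) (hw0 α)
    _ ≤ ∑ α ∈ range r, σ α :=
        sum_range_mul_le_sum_range_of_antitone hσ_mono (hσ_nonneg r) hw0 hrow (by omega) (hwN _)

/-- **Bessel-type overlap bound.** If `σ` is nonincreasing and nonnegative and the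
matrix `M` (with `r` columns) satisfies `∑_β M(α,β)² ≤ 1` for each row `α` and
`∑_α M(α,β)² ≤ 1` for each column `β`, then `∑_{α,β} σ(α) M(α,β)² ≤ ∑_{α<r} σ(α)`. -/
theorem stmt_2 (σ : ℕ → ℝ) (hσ_nonneg : ∀ α, 0 ≤ σ α) (hσ_mono : Antitone σ)
    (hσ_summable : Summable σ)
    (r : ℕ) (M : ℕ → Fin r → ℝ)
    (hrow : ∀ α, ∑ β, (M α β) ^ 2 ≤ 1)
    (hcol_summable : ∀ β, Summable (fun α => (M α β) ^ 2))
    (hcol : ∀ β, ∑' α, (M α β) ^ 2 ≤ 1)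
    (hlhs_summable : Summable (fun α => σ α * ∑ β, (M α β) ^ 2)) :
    ∑' α, σ α * ∑ β, (M α β) ^ 2 ≤ ∑ α ∈ Finset.range r, σ α :=
  stmt_2_general σ hσ_nonneg hσ_mono r M hrow hcol_summable hcol
end

section
/- Let H_A ⊗ H_B ⊗ H_C be a tensor product of finite-dimensional Hilbert spaces with dim H_B = D. Let U be a unitary acting nontrivially only on H_B ⊗ H_C (i.e., U = 1_A ⊗ V for a unitary V on H_B ⊗ H_C), and let ψ = ψ_{AB} ⊗ ψ_C be a product state across the cut (AB):C. Then the Schmidt rank of Uψ across the cut (AB):C is at most D². -/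
/-!
Reshaped across `(AB):C`, the vector `(1_A ⊗ V)(x ⊗ y)` has entries
`∑_{j', j''} (x (i, j') δ_{j'' j}) · (∑_{k'} V (j'', k) (j', k') y k')`,
so it is a product of two matrices through the index set `B × B`, and its rank is at most `b²`.
-/

open Matrix

section
variable {α β γ R : Type*} [Fintype β] [Fintype γ] [CommRing R]

/-- The `(AB):C` reshaping of `(1_A ⊗ V)(x ⊗ y)`. -/
def oneKronApplyProd (V : Matrix (β × γ) (β × γ) R) (x : α × β → R) (y : γ → R) :
    Matrix (α × β) γ R :=
  of fun p k => ∑ j', ∑ k', V (p.2, k) (j', k') * x (p.1, j') * y k'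

theorem oneKronApplyProd_eq_mul [DecidableEq β] (V : Matrix (β × γ) (β × γ) R)
    (x : α × β → R) (y : γ → R) :
    oneKronApplyProd V x y =
      (of fun (p : α × β) (q : β × β) => x (p.1, q.1) * if q.2 = p.2 then 1 else 0) *
        of fun (q : β × β) k => ∑ k', V (q.2, k) (q.1, k') * y k' := by
  ext p k
  rw [mul_apply, Fintype.sum_prod_type]
  refine Finset.sum_congr rfl fun j' _ => ?_
  rw [Finset.sum_eq_single p.2 (fun j'' _ h => by simp [h]) (by simp)]
  simp [Finset.mul_sum, mul_comm, mul_left_comm]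

theorem rank_oneKronApplyProd_le [Fintype α] [Nontrivial R] (V : Matrix (β × γ) (β × γ) R)
    (x : α × β → R) (y : γ → R) :
    (oneKronApplyProd V x y).rank ≤ Fintype.card β ^ 2 := by
  classical
  rw [oneKronApplyProd_eq_mul]
  calc _ ≤ _ := rank_mul_le_right _ _
    _ ≤ Fintype.card (β × β) := rank_le_card_height _
    _ = Fintype.card β ^ 2 := by rw [Fintype.card_prod, sq]

end

theorem stmt_4_general (a b c : ℕ) (V : Matrix (Fin b × Fin c) (Fin b × Fin c) ℂ)
    (x : Fin a × Fin b → ℂ) (y : Fin c → ℂ)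
    (Uψ : Matrix (Fin a × Fin b) (Fin c) ℂ)
    (hUψ : ∀ p k, Uψ p k = ∑ j' : Fin b, ∑ k' : Fin c,
      V (p.2, k) (j', k') * x (p.1, j') * y k') :
    Uψ.rank ≤ b ^ 2 := by
  have hUψ_eq : Uψ = oneKronApplyProd V x y := by
    ext p k
    exact hUψ p k
  simpa [hUψ_eq] using rank_oneKronApplyProd_le V x y

/-- **Schmidt rank growth under a boundary unitary.** Vectors in
`H_A ⊗ H_B ⊗ H_C` (with `dim H_A = a`, `dim H_B = b`, `dim H_C = c`) are encoded
as matrices `Matrix (Fin a × Fin b) (Fin c) ℂ` across the cut `(AB):C`, and the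
Schmidt rank across that cut is the matrix rank. If `U = 1_A ⊗ V` for a unitary
`V` on `H_B ⊗ H_C`, and `ψ = x ⊗ y` is a product state across `(AB):C`
(so `ψ (i,j) k = x (i,j) * y k`), then the Schmidt rank of `Uψ` across `(AB):C`
is at most `b² = (dim H_B)²`. -/
theorem stmt_4 (a b c : ℕ) (V : Matrix (Fin b × Fin c) (Fin b × Fin c) ℂ)
    (hV : V ∈ Matrix.unitaryGroup (Fin b × Fin c) ℂ)
    (x : Fin a × Fin b → ℂ) (y : Fin c → ℂ)
    (Uψ : Matrix (Fin a × Fin b) (Fin c) ℂ)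
    (hUψ : ∀ p k, Uψ p k = ∑ j' : Fin b, ∑ k' : Fin c,
      V (p.2, k) (j', k') * x (p.1, j') * y k') :
    Uψ.rank ≤ b ^ 2 :=
  stmt_4_general a b c V x y Uψ hUψ
end

section
/- Let μ be the probability distribution on ℕ defined piecewise by μ(α) = δ(n)/(s_{n+1} − s_n) for s_n < α ≤ s_{n+1}, where s_0 = 0 < s_1 < s_2 < ..., s_{n+1} ≤ s_1·r^n for all n ≥ 0 (r ≥ 1), δ(n) ≥ 0, and ∑_{n≥0} δ(n) = 1. Then the Shannon entropy H(μ) = −∑_α μ(α) ln μ(α) satisfies H(μ) ≤ ln s_1 + (∑_{n≥1} n δ(n)) ln r + (−∑_{n≥0} δ(n) ln δ(n)). -/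
/-- **Entropy of the flattened distribution.** Let `μ` be the probability
distribution on `ℕ` (supported on `α ≥ 1`) which equals `δ(n)/(s_{n+1} − s_n)` on
the block `s_n < α ≤ s_{n+1}`, where `s 0 = 0 < s 1 < ...` satisfies
`s_{n+1} ≤ s₁ rⁿ` with `r ≥ 1`, and `δ ≥ 0` sums to 1. Then
`H(μ) ≤ ln s₁ + (∑ n δ(n)) ln r + (−∑ δ(n) ln δ(n))`. -/
theorem stmt_11 (s : ℕ → ℕ) (hs0 : s 0 = 0) (hs_mono : StrictMono s)
    (r : ℝ) (hr : 1 ≤ r) (hs_geom : ∀ n : ℕ, (s (n + 1) : ℝ) ≤ (s 1 : ℝ) * r ^ n)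
    (δ : ℕ → ℝ) (hδ_nonneg : ∀ n, 0 ≤ δ n) (hδ_sum : HasSum δ 1)
    (μ : ℕ → ℝ) (hμ0 : μ 0 = 0)
    (hμ : ∀ n α, s n < α → α ≤ s (n + 1) →
      μ α = δ n / ((s (n + 1) : ℝ) - (s n : ℝ)))
    (hc1_summable : Summable (fun n : ℕ => (n : ℝ) * δ n))
    (hh1_summable : Summable (fun n : ℕ => δ n * Real.log (δ n)))
    (hH_summable : Summable (fun α : ℕ => μ α * Real.log (μ α))) :
    -∑' α : ℕ, μ α * Real.log (μ α) ≤
      Real.log (s 1) + (∑' n : ℕ, (n : ℝ) * δ n) * Real.log r +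
        (-∑' n : ℕ, δ n * Real.log (δ n)) := by
  set f : ℕ → ℝ := fun α => μ α * Real.log (μ α) with hf
  set c : ℕ → ℝ := fun n => (s (n + 1) : ℝ) - (s n : ℝ) with hc
  have hsn1 : ∀ n, s n < s (n + 1) := fun n => hs_mono (Nat.lt_succ_self n)
  have hc_pos : ∀ n, (0 : ℝ) < c n := by
    intro n
    have := hsn1 n
    simp only [hc, sub_pos, Nat.cast_lt]
    exact this
  have hc_one : ∀ n, (1 : ℝ) ≤ c n := by
    intro n
    have := hsn1 n
    simp only [hc]
    have : (s n : ℝ) + 1 ≤ (s (n + 1) : ℝ) := by exact_mod_cast this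
    linarith
  set g : ℕ → ℝ := fun n => δ n * Real.log (δ n) - δ n * Real.log (c n) with hg
  -- block sums
  have hblock : ∀ n, ∑ α ∈ Finset.Ioc (s n) (s (n + 1)), f α = g n := by
    intro n
    have hcard : (Finset.Ioc (s n) (s (n + 1))).card = s (n + 1) - s n :=
      Nat.card_Ioc _ _
    have hconst : ∀ α ∈ Finset.Ioc (s n) (s (n + 1)),
        f α = (δ n / c n) * Real.log (δ n / c n) := by
      intro α hα
      simp only [Finset.mem_Ioc] at hα
      simp only [hf]
      rw [hμ n α hα.1 hα.2]
    rw [Finset.sum_congr rfl hconst, Finset.sum_const, hcard, nsmul_eq_mul]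
    have hcast : ((s (n + 1) - s n : ℕ) : ℝ) = c n := by
      rw [Nat.cast_sub (le_of_lt (hsn1 n))]
    rw [hcast]
    rcases eq_or_lt_of_le (hδ_nonneg n) with h0 | hpos
    · simp [hg, ← h0]
    · rw [Real.log_div (ne_of_gt hpos) (ne_of_gt (hc_pos n))]
      have hcne := ne_of_gt (hc_pos n)
      field_simp [hg]
      ring
  -- partial sums
  have hIic : ∀ m : ℕ, Finset.Iic m = Finset.range (m + 1) := by
    intro m; ext x; simp [Nat.lt_succ_iff]
  have hpartial : ∀ N, ∑ α ∈ Finset.range (s N + 1), f α = ∑ n ∈ Finset.range N, g n := by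
    intro N
    induction N with
    | zero => simp [hs0, hf, hμ0]
    | succ N ih =>
      have hunion : Finset.Iic (s N) ∪ Finset.Ioc (s N) (s (N + 1)) = Finset.Iic (s (N + 1)) := by
        have hle := le_of_lt (hsn1 N)
        ext x
        simp only [Finset.mem_union, Finset.mem_Iic, Finset.mem_Ioc]
        omega
      have hdisj : Disjoint (Finset.Iic (s N)) (Finset.Ioc (s N) (s (N + 1))) := by
        rw [Finset.disjoint_left]
        intro a ha hb
        simp only [Finset.mem_Iic] at ha
        simp only [Finset.mem_Ioc] at hb
        omega
      rw [← hIic, ← hunion, Finset.sum_union hdisj, hIic, ih, hblock,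
        Finset.sum_range_succ]
  -- summability of δ * log c
  have hs1_pos : (0 : ℝ) < (s 1 : ℝ) := by
    have : 0 < s 1 := hs0 ▸ hsn1 0
    exact_mod_cast this
  have hbound : ∀ n, δ n * Real.log (c n) ≤ δ n * Real.log (s 1) + (n : ℝ) * δ n * Real.log r := by
    intro n
    have hlc : Real.log (c n) ≤ Real.log (s 1) + (n : ℝ) * Real.log r := by
      have h1 : c n ≤ (s 1 : ℝ) * r ^ n := by
        have := hs_geom n
        have h2 : (0 : ℝ) ≤ (s n : ℝ) := Nat.cast_nonneg _
        simp only [hc]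
        linarith
      calc Real.log (c n) ≤ Real.log ((s 1 : ℝ) * r ^ n) :=
            Real.log_le_log (hc_pos n) h1
        _ = Real.log (s 1) + (n : ℝ) * Real.log r := by
            rw [Real.log_mul (ne_of_gt hs1_pos) (by positivity), Real.log_pow]
    calc δ n * Real.log (c n) ≤ δ n * (Real.log (s 1) + (n : ℝ) * Real.log r) :=
          mul_le_mul_of_nonneg_left hlc (hδ_nonneg n)
      _ = δ n * Real.log (s 1) + (n : ℝ) * δ n * Real.log r := by ring
  have hlogc_nonneg : ∀ n, 0 ≤ δ n * Real.log (c n) := fun n =>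
    mul_nonneg (hδ_nonneg n) (Real.log_nonneg (hc_one n))
  have hRHS_summable : Summable (fun n => δ n * Real.log (s 1) + (n : ℝ) * δ n * Real.log r) :=
    (hδ_sum.summable.mul_right _).add (hc1_summable.mul_right _)
  have hlogc_summable : Summable (fun n => δ n * Real.log (c n)) :=
    Summable.of_nonneg_of_le hlogc_nonneg hbound hRHS_summable
  have hg_summable : Summable g := hh1_summable.sub hlogc_summable
  -- identify tsums
  have htend1 : Filter.Tendsto (fun N => ∑ n ∈ Finset.range N, g n)
      Filter.atTop (nhds (∑' α, f α)) := by
    have h1 : Filter.Tendsto (fun m => ∑ α ∈ Finset.range m, f α)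
        Filter.atTop (nhds (∑' α, f α)) := hH_summable.hasSum.tendsto_sum_nat
    have h2 : Filter.Tendsto (fun N => s N + 1) Filter.atTop Filter.atTop := by
      apply Filter.tendsto_atTop_mono (f := id) (fun N => ?_) Filter.tendsto_id
      have := hs_mono.le_apply (x := N)
      simp only [id]
      omega
    have h3 := h1.comp h2
    have h4 : ((fun m => ∑ α ∈ Finset.range m, f α) ∘ fun N => s N + 1)
        = fun N => ∑ n ∈ Finset.range N, g n := funext fun N => hpartial N
    rwa [h4] at h3
  have heq : ∑' α, f α = ∑' n, g n :=
    tendsto_nhds_unique htend1 hg_summable.hasSum.tendsto_sum_nat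
  have hgsplit : ∑' n, g n = (∑' n, δ n * Real.log (δ n)) - ∑' n, δ n * Real.log (c n) :=
    Summable.tsum_sub hh1_summable hlogc_summable
  rw [heq, hgsplit]
  have hfinal : ∑' n, δ n * Real.log (c n) ≤
      Real.log (s 1) + (∑' n : ℕ, (n : ℝ) * δ n) * Real.log r := by
    calc ∑' n, δ n * Real.log (c n)
        ≤ ∑' n, (δ n * Real.log (s 1) + (n : ℝ) * δ n * Real.log r) :=
          Summable.tsum_le_tsum hbound hlogc_summable hRHS_summable
      _ = (∑' n : ℕ, δ n * Real.log (s 1)) + ∑' n : ℕ, (n : ℝ) * δ n * Real.log r :=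
          Summable.tsum_add (hδ_sum.summable.mul_right _) (hc1_summable.mul_right _)
      _ = Real.log (s 1) + (∑' n : ℕ, (n : ℝ) * δ n) * Real.log r := by
          rw [tsum_mul_right, tsum_mul_right, hδ_sum.tsum_eq, one_mul]
  linarith
end

section
/- Let σ : ℕ → ℝ≥0 be nonincreasing with ∑σ(α) = 1, and suppose for integers 0 = s_0 < s_1 < ... it holds that ∑_{α > s_n} σ(α) ≤ f(n) with f strictly decreasing, f(0) = 1. Define μ(α) = δ(n)/(s_{n+1} − s_n) for s_n < α ≤ s_{n+1}, where δ(n) = f(n) − f(n+1) (assume ∑δ(n) = 1). Then μ is majorized by σ, i.e., for every m, ∑_{α=1}^m μ(α) ≤ ∑_{α=1}^m σ(α). -/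
/-!
Write `T p = tailSum σ p = ∑_{α > p} σ α` for the tails of `σ`. On a block
`s n < α ≤ s (n + 1)` of length `L`, the partial sums of `μ` grow linearly from `1 - f n` to
`1 - f (n + 1)`, whereas `∑_{α ≤ m} σ α = 1 - T m`. Since `σ` is nonincreasing, the first `k`
terms of a block carry at least the fraction `k / L` of the block's mass, so `T (s n + k)` lies
below the linear interpolation `(1 - k / L) T (s n) + (k / L) T (s (n + 1))`, and hence below
`(1 - k / L) f n + (k / L) f (n + 1)` by the tail bounds.
-/

open Finset

noncomputable def tailSum {M : Type*} [AddCommMonoid M] [TopologicalSpace M] (σ : ℕ → M)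
    (p : ℕ) : M :=
  ∑' j, σ (j + p + 1)

theorem tailSum_eq_sum_Ioc_add {G : Type*} [AddCommGroup G] [TopologicalSpace G]
    [IsTopologicalAddGroup G] [T2Space G] {σ : ℕ → G} (hσ : Summable σ) {p q : ℕ}
    (hpq : p ≤ q) : tailSum σ p = ∑ α ∈ Ioc p q, σ α + tailSum σ q := by
  have hp : Summable fun j => σ (j + p + 1) := by
    simpa only [add_assoc] using (summable_nat_add_iff (p + 1)).2 hσ
  rw [tailSum, ← hp.sum_add_tsum_nat_add (q - p), tailSum]
  congr 1
  · rw [← Ico_add_one_add_one_eq_Ioc, sum_Ico_eq_sum_range]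
    exact sum_congr (by congr 1; omega) fun i _ => congr_arg σ (by omega)
  · exact tsum_congr fun i => congr_arg σ (by omega)

theorem sum_Ioc_eq_mul_of_eqOn {R : Type*} [Ring R] {μ : ℕ → R} {c : R} {a q b : ℕ}
    (hμ : ∀ α, a < α → α ≤ b → μ α = c) (haq : a ≤ q) (hqb : q ≤ b) :
    ∑ α ∈ Ioc a q, μ α = ((q : R) - a) * c := by
  rw [sum_congr rfl fun α hα => hμ α (mem_Ioc.1 hα).1 ((mem_Ioc.1 hα).2.trans hqb), sum_const,
    Nat.card_Ioc, nsmul_eq_mul, Nat.cast_sub haq]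

section OrderedField

variable {K : Type*} [Field K] [LinearOrder K] [IsStrictOrderedRing K]

theorem sum_Ioc_eq_sub_of_eqOn_blocks {μ f : ℕ → K} {s : ℕ → ℕ} (hs : StrictMono s)
    (hμ : ∀ n α, s n < α → α ≤ s (n + 1) →
      μ α = (f n - f (n + 1)) / ((s (n + 1) : K) - (s n : K)))
    (n : ℕ) : ∑ α ∈ Ioc (s 0) (s n), μ α = f 0 - f n := by
  induction n with
  | zero => simp
  | succ n ih =>
    have hlt := hs n.lt_succ_self
    have hL : (s (n + 1) : K) - s n ≠ 0 := sub_ne_zero.2 (by exact_mod_cast hlt.ne')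
    rw [← sum_Ioc_consecutive _ (hs.monotone n.zero_le) hlt.le, ih,
      sum_Ioc_eq_mul_of_eqOn (hμ n) hlt.le le_rfl, mul_div_cancel₀ _ hL]
    ring

theorem AntitoneOn.sub_mul_sum_Ioc_le {σ : ℕ → K} {a m b : ℕ}
    (hσ : AntitoneOn σ (Set.Ioc a b)) (ham : a ≤ m) (hmb : m ≤ b) :
    ((m : K) - a) * ∑ α ∈ Ioc a b, σ α ≤ ((b : K) - a) * ∑ α ∈ Ioc a m, σ α := by
  rcases ham.eq_or_lt with rfl | ham
  · simp
  have hm : m ∈ Set.Ioc a b := ⟨ham, hmb⟩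
  have hhead : ((m : K) - a) * σ m ≤ ∑ α ∈ Ioc a m, σ α := by
    have := card_nsmul_le_sum (Ioc a m) σ (σ m) fun α hα =>
      hσ ⟨(mem_Ioc.1 hα).1, (mem_Ioc.1 hα).2.trans hmb⟩ hm (mem_Ioc.1 hα).2
    rwa [Nat.card_Ioc, nsmul_eq_mul, Nat.cast_sub ham.le] at this
  have hrest : ∑ α ∈ Ioc m b, σ α ≤ ((b : K) - m) * σ m := by
    have := sum_le_card_nsmul (Ioc m b) σ (σ m) fun α hα =>
      hσ hm ⟨ham.trans (mem_Ioc.1 hα).1, (mem_Ioc.1 hα).2⟩ (mem_Ioc.1 hα).1.le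
    rwa [Nat.card_Ioc, nsmul_eq_mul, Nat.cast_sub hmb] at this
  have hk : (0 : K) ≤ (m : K) - a := sub_nonneg.2 (by exact_mod_cast ham.le)
  have hl : (0 : K) ≤ (b : K) - m := sub_nonneg.2 (by exact_mod_cast hmb)
  rw [← sum_Ioc_consecutive σ ham.le hmb]
  nlinarith [mul_le_mul_of_nonneg_left hhead hl, mul_le_mul_of_nonneg_left hrest hk]

end OrderedField

theorem tailSum_add_le_of_antitoneOn {σ : ℕ → ℝ} (hσ : Summable σ) {a m b : ℕ}
    (hanti : AntitoneOn σ (Set.Ioc a b)) (ham : a ≤ m) (hmb : m ≤ b) (hab : a < b) {x y : ℝ}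
    (hx : tailSum σ a ≤ x) (hy : tailSum σ b ≤ y) :
    tailSum σ m + ((m : ℝ) - a) * ((x - y) / ((b : ℝ) - a)) ≤ x := by
  have hsplit_m := tailSum_eq_sum_Ioc_add hσ ham
  have hsplit_b := tailSum_eq_sum_Ioc_add hσ (ham.trans hmb)
  have havg := hanti.sub_mul_sum_Ioc_le ham hmb
  have hk : (0 : ℝ) ≤ (m : ℝ) - a := sub_nonneg.2 (by exact_mod_cast ham)
  have hl : (0 : ℝ) ≤ (b : ℝ) - m := sub_nonneg.2 (by exact_mod_cast hmb)
  have hL : (0 : ℝ) < (b : ℝ) - a := sub_pos.2 (by exact_mod_cast hab)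
  rw [mul_div_assoc', ← le_sub_iff_add_le', div_le_iff₀ hL]
  nlinarith [mul_le_mul_of_nonneg_left hx hl, mul_le_mul_of_nonneg_left hy hk]

theorem stmt_18_general (σ : ℕ → ℝ)
    (hσ_mono : ∀ α β : ℕ, 1 ≤ α → α ≤ β → σ β ≤ σ α)
    (hσ_summable : Summable σ) (hσ_sum : ∑' α : ℕ, σ (α + 1) = 1)
    (s : ℕ → ℕ) (hs0 : s 0 = 0) (hs_mono : StrictMono s)
    (f : ℕ → ℝ) (hf0 : f 0 = 1)
    (htail : ∀ n, ∑' j : ℕ, σ (j + s n + 1) ≤ f n)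
    (μ : ℕ → ℝ)
    (hμ : ∀ n α, s n < α → α ≤ s (n + 1) →
      μ α = (f n - f (n + 1)) / ((s (n + 1) : ℝ) - (s n : ℝ))) :
    ∀ m : ℕ, ∑ α ∈ Finset.Icc 1 m, μ α ≤ ∑ α ∈ Finset.Icc 1 m, σ α := by
  intro m
  rw [show Icc 1 m = Ioc 0 m from Icc_add_one_left_eq_Ioc 0 m]
  rcases m.eq_zero_or_pos with rfl | hm
  · simp
  obtain ⟨n, hnm, hmn⟩ :=
    hs_mono.exists_between_of_tendsto_atTop hs_mono.tendsto_atTop (hs0 ▸ hm)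
  have hσ_partial : ∑ α ∈ Ioc 0 m, σ α = 1 - tailSum σ m := by
    have hsplit := tailSum_eq_sum_Ioc_add hσ_summable m.zero_le
    have htotal : tailSum σ 0 = 1 := hσ_sum
    linarith
  have hμ_blocks := sum_Ioc_eq_sub_of_eqOn_blocks hs_mono hμ n
  rw [hs0, hf0] at hμ_blocks
  have hμ_partial : ∑ α ∈ Ioc 0 m, μ α = 1 - f n +
      ((m : ℝ) - s n) * ((f n - f (n + 1)) / ((s (n + 1) : ℝ) - s n)) := by
    rw [← sum_Ioc_consecutive _ (s n).zero_le hnm.le, hμ_blocks,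
      sum_Ioc_eq_mul_of_eqOn (hμ n) hnm.le hmn]
  have hanti : AntitoneOn σ (Set.Ioc (s n) (s (n + 1))) := fun α hα β _ hαβ =>
    hσ_mono α β (by have := hα.1; omega) hαβ
  have hinterp := tailSum_add_le_of_antitoneOn hσ_summable hanti hnm.le hmn
    (hs_mono n.lt_succ_self) (htail n) (htail (n + 1))
  rw [hσ_partial, hμ_partial]
  linarith

/-- **The flattened distribution is majorized by the spectrum.** Let `σ` (indexed
from `α = 1`) be a nonincreasing probability distribution with tails
`∑_{α > s_n} σ(α) ≤ f(n)` for a strictly decreasing `f` with `f 0 = 1`, where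
`0 = s₀ < s₁ < ...`. The flattened distribution `μ`, constant equal to
`δ(n)/(s_{n+1} − s_n)` on each block `s_n < α ≤ s_{n+1}` (with
`δ(n) = f(n) − f(n+1)` summing to 1), is majorized by `σ`: every partial sum of
`μ` is at most the corresponding partial sum of `σ`. -/
theorem stmt_18 (σ : ℕ → ℝ) (hσ_nonneg : ∀ α, 0 ≤ σ α)
    (hσ_mono : ∀ α β : ℕ, 1 ≤ α → α ≤ β → σ β ≤ σ α)
    (hσ_summable : Summable σ) (hσ_sum : ∑' α : ℕ, σ (α + 1) = 1)
    (s : ℕ → ℕ) (hs0 : s 0 = 0) (hs_mono : StrictMono s)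
    (f : ℕ → ℝ) (hf_anti : StrictAnti f) (hf0 : f 0 = 1)
    (htail : ∀ n, ∑' j : ℕ, σ (j + s n + 1) ≤ f n)
    (hδ_sum : ∑' n : ℕ, (f n - f (n + 1)) = 1)
    (μ : ℕ → ℝ)
    (hμ : ∀ n α, s n < α → α ≤ s (n + 1) →
      μ α = (f n - f (n + 1)) / ((s (n + 1) : ℝ) - (s n : ℝ))) :
    ∀ m : ℕ, ∑ α ∈ Finset.Icc 1 m, μ α ≤ ∑ α ∈ Finset.Icc 1 m, σ α :=
  stmt_18_general σ hσ_mono hσ_summable hσ_sum s hs0 hs_mono f hf0 htail μ hμ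
end
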